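/- arXiv:2004.02129 — 8 statements merged into one kernel-verified Lean document; each statement's English description precedes it below -/
import Mathlib

section
/- Let f : [q]^n → [q]^n be an automata network and B, B' two block-sequential update schedules (ordered partitions of [n]). If the induced arc labelings lab_B and lab_{B'} on the interaction digraph of f are equal, then the dynamics f^{(B)} and f^{(B')} are equal as functions on [q]^n. -/
namespace UD

variable {V : Type*}

/-- Source of arc `a` in the multidigraph where `⊖`-arcs (label `false`) are reversed. -/
def src (lab : V × V → Bool) (a : V × V) : V := if lab a then a.1 else a.2

/-- Destination of arc `a` in the multidigraph where `⊖`-arcs are reversed. -/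
def dst (lab : V × V → Bool) (a : V × V) : V := if lab a then a.2 else a.1

/-- `l` is a (nonempty) walk from `x` to `y` in the multidigraph obtained from the
arcs `A` by reversing the orientation of the arcs labeled `⊖` (`false`). -/
def IsRevWalk (A : Finset (V × V)) (lab : V × V → Bool) (l : List (V × V)) (x y : V) : Prop :=
  l ≠ [] ∧ (∀ a ∈ l, a ∈ A) ∧ l.Chain' (fun a b => dst lab a = src lab b) ∧
    l.head?.map (src lab) = some x ∧ l.getLast?.map (dst lab) = some y

/-- `l` uses at least one `⊖`-labeled arc. -/
def Negative (lab : V × V → Bool) (l : List (V × V)) : Prop := ∃ a ∈ l, lab a = false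

/-- A labeling is valid iff no closed walk of the reversed multidigraph uses a `⊖` arc. -/
def Valid (A : Finset (V × V)) (lab : V × V → Bool) : Prop :=
  ∀ l : List (V × V), (∃ x, IsRevWalk A lab l x x) → ¬ Negative lab l

/-- Plain directed walk in the digraph with arc set `A`. -/
def IsWalk (A : Finset (V × V)) (l : List (V × V)) (x y : V) : Prop :=
  l ≠ [] ∧ (∀ a ∈ l, a ∈ A) ∧ l.Chain' (fun a b => a.2 = b.1) ∧
    l.head?.map Prod.fst = some x ∧ l.getLast?.map Prod.snd = some y

def Acyclic (A : Finset (V × V)) : Prop := ∀ l x, ¬ IsWalk A l x x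

def IsFAS [DecidableEq V] (A F : Finset (V × V)) : Prop := F ⊆ A ∧ Acyclic (A \ F)

def IsMinFAS [DecidableEq V] (A F : Finset (V × V)) : Prop :=
  IsFAS A F ∧ ∀ F' : Finset (V × V), F' ⊂ F → ¬ IsFAS A F'

/-- Extend a labeling of the arcs of `A` to all of `V × V` (by `⊕` outside `A`). -/
def ext [DecidableEq V] (A : Finset (V × V)) (lab : A → Bool) : V × V → Bool :=
  fun a => if h : a ∈ A then lab ⟨a, h⟩ else true

def ValidOn [DecidableEq V] (A : Finset (V × V)) (lab : A → Bool) : Prop := Valid A (ext A lab)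

/-- Number of valid labelings (update digraphs) of the digraph with arc set `A`. -/
noncomputable def numUD [DecidableEq V] (A : Finset (V × V)) : ℕ := Nat.card {lab : A → Bool // ValidOn A lab}

inductive PClass
  | pos | neg | none
  deriving DecidableEq

/-- Connectivity class of the ordered pair `(x, y)` in the reversed multidigraph. -/
def HasClass (A : Finset (V × V)) (lab : V × V → Bool) (x y : V) : PClass → Prop
  | .pos => (∃ l, IsRevWalk A lab l x y) ∧ ∀ l, IsRevWalk A lab l x y → ¬ Negative lab l
  | .neg => ∃ l, IsRevWalk A lab l x y ∧ Negative lab l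
  | .none => ¬ ∃ l, IsRevWalk A lab l x y

/-- Number of valid labelings in the class `(s, t)` of the oss-graph `(A, α, β)`. -/
noncomputable def classCount [DecidableEq V] (A : Finset (V × V)) (α β : V) (s t : PClass) : ℕ :=
  Nat.card {lab : A → Bool //
    ValidOn A lab ∧ HasClass A (ext A lab) α β s ∧ HasClass A (ext A lab) β α t}

/-- Index of the part of the ordered partition `B` containing `v`. -/
def partIdx [DecidableEq V] (B : List (Finset V)) (v : V) : ℕ :=
  B.findIdx (fun P => decide (v ∈ P))

/-- `B` is an ordered partition of `V` (a block-sequential update schedule). -/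
def IsOrdPartition [DecidableEq V] (B : List (Finset V)) : Prop :=
  (∀ P ∈ B, P.Nonempty) ∧ B.Pairwise Disjoint ∧ ∀ v : V, ∃ P ∈ B, v ∈ P

/-- The labeling induced by a schedule: `⊕` (true) iff `i`'s part is not strictly before `j`'s. -/
def labSched [DecidableEq V] (B : List (Finset V)) : V × V → Bool :=
  fun a => decide (partIdx B a.2 ≤ partIdx B a.1)

/-- One step of a block-sequential dynamics: update the components in `P` in parallel. -/
def updStep {n q : ℕ} (f : (Fin n → Fin q) → (Fin n → Fin q)) (P : Finset (Fin n))
    (x : Fin n → Fin q) : Fin n → Fin q :=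
  fun j => if j ∈ P then f x j else x j

/-- The dynamics `f^(B) = f^(B_t) ∘ ... ∘ f^(B_1)` of `f` under the schedule `B`. -/
def applySched {n q : ℕ} (f : (Fin n → Fin q) → (Fin n → Fin q))
    (B : List (Finset (Fin n))) : (Fin n → Fin q) → (Fin n → Fin q) :=
  B.foldl (fun g P => updStep f P ∘ g) id

/-- Arc `(i, j)` of the interaction digraph: `f_j` effectively depends on component `i`. -/
def Arc {n q : ℕ} (f : (Fin n → Fin q) → (Fin n → Fin q)) (i j : Fin n) : Prop :=
  ∃ x y : Fin n → Fin q, (∀ k, k ≠ i → x k = y k) ∧ f x j ≠ f y j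

/-!
Under a block-sequential schedule, component `j` is updated exactly once, when its block is
reached, and it then reads the already updated value of every component of an earlier block and
the initial value of every other component. Since `f_j` only reads the components `i` with an
arc `(i, j)`, and on those arcs the two schedules agree about which of `i`, `j` comes first,
strong induction on the block index of `j` shows that both dynamics compute the same value. -/

section Schedule

variable {V : Type*} [DecidableEq V] {B : List (Finset V)}

lemma partIdx_lt_length {v : V} (hv : ∃ P ∈ B, v ∈ P) : partIdx B v < B.length :=
  List.findIdx_lt_length_of_exists (by simpa using hv)

lemma mem_getElem_iff_partIdx_eq (hB : B.Pairwise Disjoint) {v : V} {k : ℕ} (hk : k < B.length) :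
    v ∈ B[k] ↔ partIdx B v = k := by
  rw [partIdx, List.findIdx_eq hk]
  refine ⟨fun hv => ⟨by simpa using hv, fun m hm => ?_⟩, fun h => by simpa using h.1⟩
  have hdisj : Disjoint B[m] B[k] := List.pairwise_iff_getElem.1 hB m k (hm.trans hk) hk hm
  simpa using Finset.disjoint_right.1 hdisj hv

end Schedule

section Dynamics

variable {n q : ℕ} (f : (Fin n → Fin q) → (Fin n → Fin q))

lemma foldl_updStep_comp (L : List (Finset (Fin n))) (g : (Fin n → Fin q) → (Fin n → Fin q)) :
    L.foldl (fun g P => updStep f P ∘ g) g = applySched f L ∘ g := by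
  induction L generalizing g with
  | nil => rfl
  | cons P L ih =>
    have hcons : applySched f (P :: L) = applySched f L ∘ updStep f P ∘ id := ih _
    rw [List.foldl_cons, ih, hcons]
    rfl

lemma applySched_append (L₁ L₂ : List (Finset (Fin n))) :
    applySched f (L₁ ++ L₂) = applySched f L₂ ∘ applySched f L₁ := by
  rw [applySched, List.foldl_append, foldl_updStep_comp]
  rfl

variable {B : List (Finset (Fin n))}

lemma applySched_take_add_one {k : ℕ} (hk : k < B.length) :
    applySched f (B.take (k + 1)) = updStep f B[k] ∘ applySched f (B.take k) := by
  rw [List.take_add_one, List.getElem?_eq_getElem hk, Option.toList_some, applySched_append]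
  rfl

lemma applySched_take_apply (hB : B.Pairwise Disjoint) (x : Fin n → Fin q) (i : Fin n) {k : ℕ}
    (hk : k ≤ B.length) :
    applySched f (B.take k) x i =
      if partIdx B i < k then applySched f (B.take (partIdx B i + 1)) x i else x i := by
  induction k with
  | zero => simp [applySched]
  | succ k ih =>
    have hk' : k < B.length := hk
    rw [applySched_take_add_one f hk', Function.comp_apply, updStep, ih hk'.le]
    simp only [mem_getElem_iff_partIdx_eq hB]
    rcases lt_trichotomy (partIdx B i) k with h | rfl | h
    · rw [if_neg h.ne, if_pos h, if_pos (by omega)]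
    · rw [if_pos rfl, if_pos (by omega), applySched_take_add_one f hk', Function.comp_apply,
        updStep, if_pos ((mem_getElem_iff_partIdx_eq hB hk').2 rfl)]
    · rw [if_neg h.ne', if_neg (by omega), if_neg (by omega)]

variable (hB : IsOrdPartition B)
include hB

lemma applySched_apply_eq_take (x : Fin n → Fin q) (i : Fin n) :
    applySched f B x i = applySched f (B.take (partIdx B i + 1)) x i := by
  simpa [partIdx_lt_length (hB.2.2 i)] using applySched_take_apply f hB.2.1 x i le_rfl

lemma applySched_apply (x : Fin n → Fin q) (j : Fin n) :
    applySched f B x j =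
      f (fun i => if partIdx B i < partIdx B j then applySched f B x i else x i) j := by
  have hj := partIdx_lt_length (hB.2.2 j)
  rw [applySched_apply_eq_take f hB, applySched_take_add_one f hj, Function.comp_apply, updStep,
    if_pos ((mem_getElem_iff_partIdx_eq hB.2.1 hj).2 rfl)]
  congr 1
  funext i
  rw [applySched_take_apply f hB.2.1 x i hj.le, applySched_apply_eq_take f hB]

end Dynamics

lemma apply_eq_apply_of_eqOn_compl {n q : ℕ} (f : (Fin n → Fin q) → (Fin n → Fin q)) (j : Fin n)
    {s : Finset (Fin n)} (hs : ∀ i ∈ s, ¬ Arc f i j) {x y : Fin n → Fin q}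
    (hxy : ∀ i ∉ s, x i = y i) : f x j = f y j := by
  induction s using Finset.induction_on generalizing x y with
  | empty => rw [funext fun i => hxy i (Finset.notMem_empty i)]
  | insert a s _ ih =>
    have hx : f x j = f (Function.update x a (y a)) j := by
      by_contra hne
      exact hs a (Finset.mem_insert_self a s)
        ⟨x, _, fun k hk => (Function.update_of_ne hk _ _).symm, hne⟩
    rw [hx]
    refine ih (fun i hi => hs i (Finset.mem_insert_of_mem hi)) fun i hi => ?_
    by_cases hia : i = a
    · subst hia; simp
    · rw [Function.update_of_ne hia]
      exact hxy i (by simp [hia, hi])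

lemma apply_eq_apply_of_forall_arc {n q : ℕ} (f : (Fin n → Fin q) → (Fin n → Fin q)) (j : Fin n)
    {x y : Fin n → Fin q} (hxy : ∀ i, Arc f i j → x i = y i) : f x j = f y j := by
  classical
  exact apply_eq_apply_of_eqOn_compl f j (s := Finset.univ.filter fun i => ¬ Arc f i j)
    (fun i hi => (Finset.mem_filter.1 hi).2) fun i hi => hxy i (by simpa using hi)

/-- If the labelings induced by two block-sequential update schedules on the interaction
digraph agree, then the dynamics agree. -/
theorem statement0 {n q : ℕ} (f : (Fin n → Fin q) → (Fin n → Fin q))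
    (B B' : List (Finset (Fin n))) (hB : IsOrdPartition B) (hB' : IsOrdPartition B')
    (hlab : ∀ i j : Fin n, Arc f i j →
      (partIdx B i < partIdx B j ↔ partIdx B' i < partIdx B' j)) :
    applySched f B = applySched f B' := by
  funext x j
  induction hj : partIdx B j using Nat.strong_induction_on generalizing j with
  | _ p ih =>
    rw [applySched_apply f hB, applySched_apply f hB']
    refine apply_eq_apply_of_forall_arc f j fun i hij => ?_
    by_cases hlt : partIdx B i < partIdx B j
    · rw [if_pos hlt, if_pos ((hlab i j hij).1 hlt)]
      exact ih _ (hj ▸ hlt) i rfl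
    · rw [if_neg hlt, if_neg (mt (hlab i j hij).2 hlt)]

end UD
end

section
/- A labeling lab : A → {⊕,⊖} of a finite loopless digraph G = (V,A) is valid (corresponds to some block-sequential update schedule) if and only if the multidigraph obtained by keeping ⊕-arcs with their orientation and reversing the orientation of ⊖-arcs contains no cycle with at least one ⊖-labeled arc. -/
namespace UD

variable {V : Type*}

/-!
A schedule is the same thing as a rank function `h : V → ℕ` for which the `⊖`-arcs are exactly
the arcs along which `h` strictly increases: take the part index, and conversely the level sets
of `h` in increasing order. In the reversed multidigraph such an `h` never increases along an arc
and drops along each `⊖`-arc, so no closed walk uses a `⊖`-arc. Conversely, if no closed walk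
uses a `⊖`-arc, let `h v` count the `⊖`-arcs whose tail in the reversed multidigraph is reachable
from `v`. Crossing an arc can only shrink this set, and crossing a `⊖`-arc `e` removes `e` itself,
since reaching the tail of `e` again would close a cycle through `e`.
-/

section Labeling

variable {A : Finset (V × V)} {lab : V × V → Bool}

theorem isRevWalk_singleton {a : V × V} (ha : a ∈ A) :
    IsRevWalk A lab [a] (src lab a) (dst lab a) :=
  ⟨by simp, by simp [ha], List.isChain_singleton _, by simp, by simp⟩

theorem IsRevWalk.append {l l' : List (V × V)} {x y z : V} (h : IsRevWalk A lab l x y)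
    (h' : IsRevWalk A lab l' y z) : IsRevWalk A lab (l ++ l') x z := by
  obtain ⟨hne, hmem, hch, hhd, hlast⟩ := h
  obtain ⟨hne', hmem', hch', hhd', hlast'⟩ := h'
  refine ⟨by simp [hne], fun a ha => ?_, List.isChain_append.2 ⟨hch, hch', fun a ha b hb => ?_⟩,
    by rwa [List.head?_append_of_ne_nil _ hne], by rwa [List.getLast?_append_of_ne_nil _ hne']⟩
  · rcases List.mem_append.1 ha with ha | ha
    exacts [hmem a ha, hmem' a ha]
  · rw [Option.mem_def] at ha hb
    simp only [ha, hb, Option.map_some, Option.some.injEq] at hlast hhd'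
    rw [hlast, hhd']

theorem IsRevWalk.tail {a b : V × V} {t : List (V × V)} {x y : V}
    (h : IsRevWalk A lab (a :: b :: t) x y) : IsRevWalk A lab (b :: t) (dst lab a) y := by
  obtain ⟨-, hmem, hch, -, hlast⟩ := h
  replace hch := List.isChain_cons_cons.1 hch
  exact ⟨by simp, fun c hc => hmem c (List.mem_cons_of_mem a hc), hch.2, by simp [hch.1],
    by rwa [List.getLast?_cons_cons] at hlast⟩

def Reaches (A : Finset (V × V)) (lab : V × V → Bool) (x y : V) : Prop :=
  x = y ∨ ∃ l, IsRevWalk A lab l x y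

theorem Reaches.of_dst {a : V × V} {y : V} (ha : a ∈ A) (h : Reaches A lab (dst lab a) y) :
    Reaches A lab (src lab a) y := by
  rcases h with rfl | ⟨l, hl⟩
  · exact Or.inr ⟨_, isRevWalk_singleton ha⟩
  · exact Or.inr ⟨_, (isRevWalk_singleton ha).append hl⟩

theorem Valid.not_reaches_dst_src (hv : Valid A lab) {a : V × V} (ha : a ∈ A)
    (hneg : lab a = false) : ¬ Reaches A lab (dst lab a) (src lab a) := by
  rintro (h | ⟨l, hl⟩)
  · exact hv [a] ⟨_, h ▸ isRevWalk_singleton ha⟩ ⟨a, by simp, hneg⟩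
  · exact hv (l ++ [a]) ⟨_, hl.append (isRevWalk_singleton ha)⟩ ⟨a, by simp, hneg⟩

def IsRank (A : Finset (V × V)) (lab : V × V → Bool) (h : V → ℕ) : Prop :=
  ∀ a ∈ A, lab a = decide (h a.2 ≤ h a.1)

theorem IsRank.dst_add_le_src {h : V → ℕ} (hh : IsRank A lab h) {a : V × V} (ha : a ∈ A) :
    h (dst lab a) + (if !lab a then 1 else 0) ≤ h (src lab a) := by
  have := hh a ha
  cases hl : lab a <;> simp_all [src, dst]

theorem IsRank.add_countP_le {h : V → ℕ} (hh : IsRank A lab h) :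
    ∀ {l : List (V × V)} {x y : V}, IsRevWalk A lab l x y →
      h y + l.countP (fun a => !lab a) ≤ h x
  | [], _, _, hw => absurd rfl hw.1
  | [a], x, y, hw => by
    obtain ⟨-, hmem, -, hhd, hlast⟩ := hw
    simp only [List.head?_cons, List.getLast?_singleton, Option.map_some,
      Option.some.injEq] at hhd hlast
    subst hhd hlast
    simpa [List.countP_cons] using hh.dst_add_le_src (hmem a (by simp))
  | a :: b :: t, x, y, hw => by
    obtain rfl : src lab a = x := by simpa using hw.2.2.2.1
    have := hh.add_countP_le hw.tail
    have := hh.dst_add_le_src (hw.2.1 a (by simp))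
    rw [List.countP_cons]
    omega

theorem IsRank.valid {h : V → ℕ} (hh : IsRank A lab h) : Valid A lab := by
  rintro l ⟨x, hw⟩ ⟨a, ha, hneg⟩
  have hpos : 0 < l.countP (fun a => !lab a) := List.countP_pos_iff.2 ⟨a, ha, by simp [hneg]⟩
  have := hh.add_countP_le hw
  omega

open Classical in
noncomputable def negReach (A : Finset (V × V)) (lab : V × V → Bool) (v : V) :
    Finset (V × V) :=
  A.filter fun a => lab a = false ∧ Reaches A lab v (src lab a)

theorem negReach_dst_subset {a : V × V} (ha : a ∈ A) :
    negReach A lab (dst lab a) ⊆ negReach A lab (src lab a) := by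
  intro b hb
  simp only [negReach, Finset.mem_filter] at hb ⊢
  exact ⟨hb.1, hb.2.1, hb.2.2.of_dst ha⟩

theorem Valid.negReach_dst_ssubset (hv : Valid A lab) {a : V × V} (ha : a ∈ A)
    (hneg : lab a = false) : negReach A lab (dst lab a) ⊂ negReach A lab (src lab a) := by
  refine (Finset.ssubset_iff_of_subset (negReach_dst_subset ha)).2 ⟨a, ?_, fun h => ?_⟩
  · simp only [negReach, Finset.mem_filter]
    exact ⟨ha, hneg, Or.inl rfl⟩
  · simp only [negReach, Finset.mem_filter] at h
    exact hv.not_reaches_dst_src ha hneg h.2.2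

theorem Valid.isRank_card_negReach (hv : Valid A lab) :
    IsRank A lab fun v => (negReach A lab v).card := by
  intro a ha
  cases hl : lab a
  · have := Finset.card_lt_card (hv.negReach_dst_ssubset ha hl)
    simp only [src, dst, hl] at this
    simpa using this
  · have := Finset.card_le_card (negReach_dst_subset (lab := lab) ha)
    simp only [src, dst, hl] at this
    simpa using this

theorem valid_iff_exists_isRank : Valid A lab ↔ ∃ h, IsRank A lab h :=
  ⟨fun hv => ⟨_, hv.isRank_card_negReach⟩, fun ⟨_, hh⟩ => hh.valid⟩

end Labeling

section Schedule

variable [DecidableEq V]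

theorem exists_isOrdPartition_partIdx_le_iff [Fintype V] (g : V → ℕ) :
    ∃ B : List (Finset V), IsOrdPartition B ∧ ∀ u v, partIdx B u ≤ partIdx B v ↔ g u ≤ g v := by
  set L := (Finset.univ.image g).sort (· ≤ ·)
  have hL : ∀ v, g v ∈ L := by simp [L]
  have hsorted : L.SortedLT := Finset.sortedLT_sort _
  set B := L.map fun k => Finset.univ.filter (g · = k)
  have hidx : ∀ v, ∃ hi : partIdx B v < L.length, L[partIdx B v] = g v := by
    intro v
    have hex : ∃ k ∈ L, decide (g v = k) = true := ⟨g v, hL v, by simp⟩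
    have hlt := List.findIdx_lt_length_of_exists hex
    have hpart : partIdx B v = L.findIdx fun k => decide (g v = k) := by
      simp [partIdx, B, Function.comp_def]
    rw [hpart]
    exact ⟨hlt, (of_decide_eq_true (List.findIdx_getElem (w := hlt))).symm⟩
  refine ⟨B, ⟨?_, ?_, fun v => ⟨_, List.mem_map_of_mem (hL v), by simp⟩⟩, fun u v => ?_⟩
  · simp only [B, L, List.mem_map, Finset.mem_sort, Finset.mem_image]
    rintro _ ⟨_, ⟨v, -, rfl⟩, rfl⟩
    exact ⟨v, by simp⟩
  · refine List.Pairwise.map _ (fun k k' hkk' => ?_) hsorted.pairwise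
    exact Finset.disjoint_filter.2 fun v _ hk hk' => hkk'.ne (hk.symm.trans hk')
  · obtain ⟨hu, hgu⟩ := hidx u
    obtain ⟨hv, hgv⟩ := hidx v
    rw [← hgu, ← hgv]
    exact (hsorted.strictMono_get.le_iff_le (a := ⟨_, hu⟩) (b := ⟨_, hv⟩)).symm

theorem exists_schedule_iff_exists_isRank [Fintype V] (A : Finset (V × V))
    (lab : V × V → Bool) :
    (∃ B : List (Finset V), IsOrdPartition B ∧ ∀ a ∈ A, lab a = labSched B a) ↔
      ∃ h, IsRank A lab h := by
  constructor
  · rintro ⟨B, -, hB⟩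
    exact ⟨partIdx B, hB⟩
  · rintro ⟨h, hh⟩
    obtain ⟨B, hB, hle⟩ := exists_isOrdPartition_partIdx_le_iff h
    refine ⟨B, hB, fun a ha => ?_⟩
    rw [hh a ha, labSched]
    simp only [hle]

end Schedule

theorem statement2_general {V : Type*} [Fintype V] [DecidableEq V] (A : Finset (V × V))
    (lab : V × V → Bool) :
    (∃ B : List (Finset V), IsOrdPartition B ∧ ∀ a ∈ A, lab a = labSched B a) ↔
      Valid A lab := by
  rw [exists_schedule_iff_exists_isRank, valid_iff_exists_isRank]

/-- A labeling is realized by some block-sequential update schedule iff the multidigraph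
obtained by reversing the `⊖`-arcs has no cycle using a `⊖`-arc. -/
theorem statement2 {V : Type*} [Fintype V] [DecidableEq V] (A : Finset (V × V))
    (hloop : ∀ a ∈ A, a.1 ≠ a.2) (lab : V × V → Bool) :
    (∃ B : List (Finset V), IsOrdPartition B ∧ ∀ a ∈ A, lab a = labSched B a) ↔
      Valid A lab :=
  statement2_general A lab

end UD
end

section
/- For any valid labeling lab of a digraph G = (V,A), the set F_lab = { a ∈ A : lab(a) = ⊕ } of positively labeled arcs is a feedback arc set of G. -/
namespace UD

variable {V : Type*}

/-!
Every arc outside `F_lab` is a `⊖`-arc. Hence a cycle of `G` avoiding `F_lab`, traversed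
backwards, is a closed walk of the reversed multidigraph made of `⊖`-arcs only, which
validity forbids.
-/

theorem src_of_lab_eq_false {lab : V × V → Bool} {a : V × V} (h : lab a = false) :
    src lab a = a.2 := by
  simp [src, h]

theorem dst_of_lab_eq_false {lab : V × V → Bool} {a : V × V} (h : lab a = false) :
    dst lab a = a.1 := by
  simp [dst, h]

theorem IsWalk.mono {A B : Finset (V × V)} {l : List (V × V)} {x y : V} (hAB : A ⊆ B)
    (hw : IsWalk A l x y) : IsWalk B l x y :=
  ⟨hw.1, fun a ha => hAB (hw.2.1 a ha), hw.2.2⟩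

theorem IsWalk.isRevWalk_reverse {A : Finset (V × V)} {lab : V × V → Bool}
    {l : List (V × V)} {x y : V} (hw : IsWalk A l x y) (hneg : ∀ a ∈ l, lab a = false) :
    IsRevWalk A lab l.reverse y x := by
  obtain ⟨hne, hmem, hchain, hhead, hlast⟩ := hw
  refine ⟨by simpa using hne, fun a ha => hmem a (List.mem_reverse.mp ha), ?_, ?_, ?_⟩
  · refine List.isChain_reverse.mpr (hchain.imp_of_mem_imp fun a b ha hb hab => ?_)
    rw [dst_of_lab_eq_false (hneg b hb), src_of_lab_eq_false (hneg a ha), hab]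
  · rw [List.getLast?_eq_some_getLast hne] at hlast
    rw [List.head?_reverse, List.getLast?_eq_some_getLast hne, Option.map_some,
      src_of_lab_eq_false (hneg _ (List.getLast_mem hne))]
    simpa using hlast
  · rw [List.head?_eq_some_head hne] at hhead
    rw [List.getLast?_reverse, List.head?_eq_some_head hne, Option.map_some,
      dst_of_lab_eq_false (hneg _ (List.head_mem hne))]
    simpa using hhead

theorem negative_of_forall_lab_eq_false {lab : V × V → Bool} {l : List (V × V)} (hne : l ≠ [])
    (hneg : ∀ a ∈ l, lab a = false) : Negative lab l :=
  ⟨l.head hne, List.head_mem hne, hneg _ (List.head_mem hne)⟩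

theorem lab_eq_false_of_mem_sdiff_filter [DecidableEq V] {A : Finset (V × V)}
    {lab : V × V → Bool} {a : V × V} (ha : a ∈ A \ A.filter (fun a => lab a = true)) :
    lab a = false := by
  simp_all [Finset.mem_sdiff, Finset.mem_filter]

/-- For any valid labeling, the set of `⊕`-labeled arcs is a feedback arc set. -/
theorem statement3 {V : Type*} [DecidableEq V] (A : Finset (V × V)) (lab : V × V → Bool)
    (h : Valid A lab) :
    IsFAS A (A.filter (fun a => lab a = true)) := by
  refine ⟨A.filter_subset _, fun l x hw => ?_⟩
  have hneg : ∀ a ∈ l, lab a = false := fun a ha =>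
    lab_eq_false_of_mem_sdiff_filter (hw.2.1 a ha)
  have hrev : IsRevWalk A lab l.reverse x x :=
    (hw.mono Finset.sdiff_subset).isRevWalk_reverse hneg
  exact h l.reverse ⟨x, hrev⟩ (negative_of_forall_lab_eq_false hrev.1
    fun a ha => hneg a (List.mem_reverse.mp ha))

end UD
end

section
/- If F ⊆ A is a minimal feedback arc set of a digraph G = (V,A) (minimal under inclusion), then the labeling lab with lab(a) = ⊕ for a ∈ F and lab(a) = ⊖ otherwise is a valid labeling of G. -/
/-!
Every arc of the reversed multidigraph can be undone by a directed path in the acyclic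
digraph `A \ F`: a `⊖`-arc `(u, v) ∉ F` is itself such a path from `u` back to `v`, and
for `(u, v) ∈ F`, minimality of `F` means `A \ F` plus `(u, v)` has a cycle, which yields a
path from `v` back to `u` in `A \ F`. Undoing a closed walk arc by arc therefore gives a closed
walk in `A \ F`, nonempty as soon as a `⊖`-arc was used, contradicting acyclicity.
-/

namespace UD

variable {V : Type*}

open Relation

def arcRel (B : Finset (V × V)) (u v : V) : Prop := (u, v) ∈ B

section RevWalk

variable {A : Finset (V × V)} {lab : V × V → Bool} {a : V × V} {l : List (V × V)} {x y : V}

theorem isWalk_iff_isRevWalk : IsWalk A l x y ↔ IsRevWalk A (fun _ => true) l x y := Iff.rfl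

theorem isRevWalk_iff : IsRevWalk A lab l x y ↔ l ≠ [] ∧ (∀ a ∈ l, a ∈ A) ∧
    l.IsChain (fun a b => dst lab a = src lab b) ∧
    l.head?.map (src lab) = some x ∧ l.getLast?.map (dst lab) = some y := Iff.rfl

theorem isRevWalk_singleton_iff :
    IsRevWalk A lab [a] x y ↔ a ∈ A ∧ src lab a = x ∧ dst lab a = y := by
  simp [isRevWalk_iff]

theorem isRevWalk_cons_iff (hl : l ≠ []) :
    IsRevWalk A lab (a :: l) x y ↔ a ∈ A ∧ src lab a = x ∧ IsRevWalk A lab l (dst lab a) y := by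
  obtain ⟨b, l, rfl⟩ := List.exists_cons_of_ne_nil hl
  simp only [isRevWalk_iff, List.isChain_cons_cons, List.mem_cons, forall_eq_or_imp, List.head?_cons,
    Option.map_some, Option.some_inj, List.getLast?_cons_cons, ne_eq, reduceCtorEq,
    not_false_eq_true, true_and]
  rw [eq_comm (a := dst lab a)]
  tauto

theorem IsRevWalk.transGen {r : V → V → Prop} (hr : ∀ a ∈ A, r (src lab a) (dst lab a))
    (h : IsRevWalk A lab l x y) : TransGen r x y := by
  induction l generalizing x with
  | nil => exact absurd rfl h.1
  | cons a l ih =>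
    rcases eq_or_ne l [] with rfl | hl
    · obtain ⟨ha, rfl, rfl⟩ := isRevWalk_singleton_iff.1 h
      exact .single (hr a ha)
    · obtain ⟨ha, rfl, htail⟩ := (isRevWalk_cons_iff hl).1 h
      exact .head (hr a ha) (ih htail)

theorem IsRevWalk.reflTransGen_swap {r : V → V → Prop}
    (hr : ∀ a ∈ A, ReflTransGen r (dst lab a) (src lab a))
    (h : IsRevWalk A lab l x y) : ReflTransGen r y x := by
  have hswap := transGen_swap.1 (h.transGen (r := Function.swap (ReflTransGen r)) hr)
  rwa [transGen_eq_self] at hswap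

theorem IsRevWalk.transGen_swap_of_negative {r : V → V → Prop}
    (hr : ∀ a ∈ A, ReflTransGen r (dst lab a) (src lab a))
    (hneg : ∀ a ∈ A, lab a = false → TransGen r (dst lab a) (src lab a))
    (h : IsRevWalk A lab l x y) (hl : Negative lab l) : TransGen r y x := by
  induction l generalizing x with
  | nil => exact absurd rfl h.1
  | cons a l ih =>
    rcases eq_or_ne l [] with rfl | hl'
    · obtain ⟨ha, rfl, rfl⟩ := isRevWalk_singleton_iff.1 h
      obtain ⟨b, hb, hbneg⟩ := hl
      obtain rfl := List.mem_singleton.1 hb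
      exact hneg b ha hbneg
    · obtain ⟨ha, rfl, htail⟩ := (isRevWalk_cons_iff hl').1 h
      obtain ⟨b, hb, hbneg⟩ := hl
      rcases List.mem_cons.1 hb with rfl | hb
      · exact TransGen.trans_right (htail.reflTransGen_swap hr) (hneg b ha hbneg)
      · exact (ih htail ⟨b, hb, hbneg⟩).trans_left (hr a ha)

end RevWalk

section Acyclic

variable {B : Finset (V × V)}

theorem exists_isWalk_of_transGen {x y : V} (h : TransGen (arcRel B) x y) :
    ∃ l, IsWalk B l x y := by
  induction h using TransGen.head_induction_on with
  | single hxy =>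
    exact ⟨[(_, _)], isWalk_iff_isRevWalk.2 (isRevWalk_singleton_iff.2 ⟨hxy, rfl, rfl⟩)⟩
  | head hxz _ ih =>
    obtain ⟨l, hl⟩ := ih
    exact ⟨(_, _) :: l, isWalk_iff_isRevWalk.2 ((isRevWalk_cons_iff hl.1).2 ⟨hxz, rfl, hl⟩)⟩

theorem acyclic_iff_forall_not_transGen :
    Acyclic B ↔ ∀ x, ¬ TransGen (arcRel B) x x := by
  constructor
  · intro hB x hx
    obtain ⟨l, hl⟩ := exists_isWalk_of_transGen hx
    exact hB l x hl
  · intro hB l x hl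
    exact hB x ((isWalk_iff_isRevWalk.1 hl).transGen fun a ha => ha)

/-- A path through a new arc `f` enters it at `f.1` and leaves it for the last time at `f.2`. -/
theorem transGen_arcRel_insert [DecidableEq V] {f : V × V} {x y : V}
    (h : TransGen (arcRel (insert f B)) x y) :
    TransGen (arcRel B) x y ∨
      ReflTransGen (arcRel B) x f.1 ∧ ReflTransGen (arcRel B) f.2 y := by
  induction h with
  | single hxy =>
    rcases Finset.mem_insert.1 hxy with rfl | hxy
    · exact .inr ⟨.refl, .refl⟩
    · exact .inl (.single hxy)
  | tail _ hbc ih =>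
    rcases Finset.mem_insert.1 hbc with rfl | hbc
    · exact .inr ⟨ih.elim TransGen.to_reflTransGen fun h => h.1, .refl⟩
    · exact ih.imp (·.tail hbc) fun h => ⟨h.1, h.2.tail hbc⟩

end Acyclic

/-- Minimality: putting `f` back creates a cycle, which must pass through `f`. -/
theorem IsMinFAS.reflTransGen_of_mem [DecidableEq V] {A F : Finset (V × V)} (h : IsMinFAS A F)
    {f : V × V} (hf : f ∈ F) : ReflTransGen (arcRel (A \ F)) f.2 f.1 := by
  have hinsert : A \ F.erase f = insert f (A \ F) := by
    ext a
    by_cases haf : a = f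
    · simp [haf, h.1.1 hf]
    · simp [haf]
  have hcyc : ¬ Acyclic (insert f (A \ F)) := fun hacyc =>
    h.2 _ (F.erase_ssubset hf) ⟨(F.erase_subset f).trans h.1.1, hinsert ▸ hacyc⟩
  obtain ⟨x, hx⟩ := not_forall_not.1 (mt acyclic_iff_forall_not_transGen.2 hcyc)
  rcases transGen_arcRel_insert hx with hx | ⟨hxf, hfx⟩
  · exact absurd hx (acyclic_iff_forall_not_transGen.1 h.1.2 x)
  · exact hfx.trans hxf

/-- The labeling whose `⊕`-arcs are exactly a minimal feedback arc set is valid. -/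
theorem statement4 {V : Type*} [DecidableEq V] (A F : Finset (V × V))
    (h : IsMinFAS A F) :
    Valid A (fun a => decide (a ∈ F)) := by
  rintro l ⟨x, hl⟩ hneg
  have hneg_arc : ∀ a ∈ A, decide (a ∈ F) = false →
      TransGen (arcRel (A \ F)) (dst (fun a => decide (a ∈ F)) a)
        (src (fun a => decide (a ∈ F)) a) := by
    intro a ha haF
    simp only [decide_eq_false_iff_not] at haF
    simpa [src, dst, haF] using TransGen.single (r := arcRel (A \ F))
      (Finset.mem_sdiff.2 ⟨ha, haF⟩)
  have harc : ∀ a ∈ A, ReflTransGen (arcRel (A \ F)) (dst (fun a => decide (a ∈ F)) a)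
      (src (fun a => decide (a ∈ F)) a) := by
    intro a ha
    by_cases haF : a ∈ F
    · simpa [src, dst, haF] using h.reflTransGen_of_mem haF
    · exact (hneg_arc a ha (by simpa using haF)).to_reflTransGen
  exact acyclic_iff_forall_not_transGen.1 h.1.2 x (hl.transGen_swap_of_negative harc hneg_arc hneg)

end UD
end

section
/- Let G = (V,E) be a finite undirected graph, ≺ a linear order on V, and G' = (V,A) the acyclic orientation of G with (u,v) ∈ A iff {u,v} ∈ E and u ≺ v. The map sending a labeling lab : A → {⊕,⊖} to the orientation O of E where each ⊕-labeled arc keeps its orientation and each ⊖-labeled arc is reversed, is a bijection between the valid labelings of G' and the acyclic orientations of G. -/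
/-!
Write `orient lab a` for the arc `a`, reversed when it is labelled `⊖`; the map of the theorem
sends `lab` to the image of `A` under `orient lab`. Walks of the multidigraph with the `⊖`-arcs
reversed are exactly the walks of this image, read through `orient lab`. As `A` follows the
order it is acyclic, so a closed walk of the reversed multidigraph must use a `⊖`-arc: validity
of `lab` is the same as acyclicity of the image. Since `A` contains no two opposite arcs, an arc
`a ∈ A` lies in the image iff it is labelled `⊕`, which gives injectivity; and an orientation
`O` is the image of the labeling `a ↦ (a ∈ A ∧ a ∈ O)`.
-/

namespace UD

variable {V : Type*}

def orient (lab : V × V → Bool) (a : V × V) : V × V := if lab a then a else a.swap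

theorem orient_of_true {lab : V × V → Bool} {a : V × V} (h : lab a = true) :
    orient lab a = a := if_pos h

theorem orient_of_false {lab : V × V → Bool} {a : V × V} (h : lab a = false) :
    orient lab a = a.swap := by
  simp [orient, h]

theorem src_eq_fst_orient (lab : V × V → Bool) : src lab = Prod.fst ∘ orient lab := by
  funext a; cases h : lab a <;> simp [src, orient, h]

theorem dst_eq_snd_orient (lab : V × V → Bool) : dst lab = Prod.snd ∘ orient lab := by
  funext a; cases h : lab a <;> simp [dst, orient, h]

theorem filter_union_image_swap_eq_image_orient [DecidableEq V] (A : Finset (V × V))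
    (lab : V × V → Bool) :
    A.filter (fun a => lab a = true) ∪ (A.filter (fun a => lab a = false)).image Prod.swap =
      A.image (orient lab) := by
  conv_rhs => rw [← Finset.filter_union_filter_not_eq (fun a => lab a = true) A]
  simp only [Bool.not_eq_true]
  rw [Finset.image_union]
  congr 1
  · conv_lhs => rw [← Finset.image_id (s := A.filter _)]
    exact Finset.image_congr fun a ha => (orient_of_true (Finset.mem_filter.1 ha).2).symm
  · exact Finset.image_congr fun a ha => (orient_of_false (Finset.mem_filter.1 ha).2).symm

theorem isWalk_map_orient_iff {A O : Finset (V × V)} {lab : V × V → Bool} {l : List (V × V)}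
    {x y : V} (hlA : ∀ a ∈ l, a ∈ A) (hlO : ∀ a ∈ l, orient lab a ∈ O) :
    IsWalk O (l.map (orient lab)) x y ↔ IsRevWalk A lab l x y := by
  rw [IsWalk, IsRevWalk, src_eq_fst_orient, dst_eq_snd_orient]
  simp only [ne_eq, List.map_eq_nil_iff, List.forall_mem_map, List.head?_map,
    List.getLast?_map, Option.map_map, iff_true_intro hlA, iff_true_intro hlO]
  exact and_congr_right' <| and_congr_right' <| and_congr_left' (List.isChain_map _)

theorem _root_.List.exists_map_eq_of_forall_mem_image {α β : Type*} {f : α → β} {s : Set α} :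
    ∀ {w : List β}, (∀ b ∈ w, b ∈ f '' s) → ∃ l : List α, (∀ a ∈ l, a ∈ s) ∧ l.map f = w
  | [], _ => ⟨[], by simp⟩
  | b :: w, h => by
    obtain ⟨a, ha, rfl⟩ := h b List.mem_cons_self
    obtain ⟨l, hl, rfl⟩ :=
      List.exists_map_eq_of_forall_mem_image fun c hc => h c (List.mem_cons_of_mem _ hc)
    exact ⟨a :: l, by simpa [ha] using hl, rfl⟩

theorem IsWalk.lt_of_forall_fst_lt [Preorder V] {A : Finset (V × V)}
    (hA : ∀ a ∈ A, a.1 < a.2) : ∀ {l : List (V × V)} {x y : V}, IsWalk A l x y → x < y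
  | [], _, _, h => absurd rfl h.1
  | [a], x, y, ⟨_, hmem, _, hx, hy⟩ => by
    simp only [List.head?_cons, List.getLast?_singleton, Option.map_some,
      Option.some.injEq] at hx hy
    exact hx ▸ hy ▸ hA a (hmem a List.mem_cons_self)
  | a :: b :: l, x, y, ⟨_, hmem, hchain, hx, hy⟩ => by
    replace hchain := List.isChain_cons_cons.1 hchain
    simp only [List.head?_cons, Option.map_some, Option.some.injEq] at hx
    have htail : IsWalk A (b :: l) a.2 y :=
      ⟨List.cons_ne_nil _ _, fun c hc => hmem c (List.mem_cons_of_mem a hc), hchain.2,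
        by simp [hchain.1], by rwa [List.getLast?_cons_cons] at hy⟩
    exact hx ▸ (hA a (hmem a List.mem_cons_self)).trans (lt_of_forall_fst_lt hA htail)

theorem acyclic_of_forall_fst_lt [Preorder V] {A : Finset (V × V)} (hA : ∀ a ∈ A, a.1 < a.2) :
    Acyclic A :=
  fun _ x h => lt_irrefl x (h.lt_of_forall_fst_lt hA)

def IsOrientationOf (A O : Finset (V × V)) : Prop :=
  (∀ a ∈ A, (a ∈ O ∧ a.swap ∉ O) ∨ (a.swap ∈ O ∧ a ∉ O)) ∧ (∀ b ∈ O, b ∈ A ∨ b.swap ∈ A)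

def labelOf [DecidableEq V] (A O : Finset (V × V)) (a : V × V) : Bool := decide (a ∈ A ∧ a ∈ O)

section

variable [DecidableEq V] {A O : Finset (V × V)} {lab : V × V → Bool}

theorem mem_image_orient_iff {b : V × V} :
    b ∈ A.image (orient lab) ↔ (b ∈ A ∧ lab b = true) ∨ (b.swap ∈ A ∧ lab b.swap = false) := by
  constructor
  · intro hb
    obtain ⟨a, ha, rfl⟩ := Finset.mem_image.1 hb
    cases h : lab a
    · simp [orient_of_false h, ha, h]
    · simp [orient_of_true h, ha, h]
  · rintro (⟨hb, h⟩ | ⟨hb, h⟩)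
    · exact Finset.mem_image.2 ⟨b, hb, orient_of_true h⟩
    · exact Finset.mem_image.2 ⟨b.swap, hb, by rw [orient_of_false h, Prod.swap_swap]⟩

theorem mem_image_orient_iff_of_mem (hasym : ∀ a ∈ A, a.swap ∉ A) {a : V × V} (ha : a ∈ A) :
    a ∈ A.image (orient lab) ↔ lab a = true := by
  rw [mem_image_orient_iff]
  simp [ha, hasym a ha]

theorem image_orient_isOrientationOf (hasym : ∀ a ∈ A, a.swap ∉ A) :
    IsOrientationOf A (A.image (orient lab)) := by
  refine ⟨fun a ha => ?_, fun b hb => ?_⟩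
  · rw [mem_image_orient_iff_of_mem hasym ha, mem_image_orient_iff, Prod.swap_swap]
    cases lab a <;> simp [ha, hasym a ha]
  · rcases mem_image_orient_iff.1 hb with h | h
    exacts [Or.inl h.1, Or.inr h.1]

theorem image_orient_labelOf (hO : IsOrientationOf A O) :
    A.image (orient (labelOf A O)) = O := by
  ext b
  rw [mem_image_orient_iff]
  constructor
  · rintro (⟨-, h⟩ | ⟨hb, h⟩)
    · simp only [labelOf, decide_eq_true_eq] at h
      exact h.2
    · have hbO : b.swap ∉ O := by simpa [labelOf, hb] using h
      simpa [hbO] using hO.1 b.swap hb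
  · intro hb
    rcases hO.2 b hb with h | h
    · exact Or.inl ⟨h, by simp [labelOf, h, hb]⟩
    · have hbO : b.swap ∉ O := by simpa [hb] using hO.1 b.swap h
      exact Or.inr ⟨h, by simp [labelOf, hbO]⟩

theorem valid_iff_acyclic_image_orient (hA : Acyclic A) :
    Valid A lab ↔ Acyclic (A.image (orient lab)) := by
  constructor
  · intro hval w x hw
    obtain ⟨l, hlA, rfl⟩ := List.exists_map_eq_of_forall_mem_image (f := orient lab) (s := A)
      fun b hb => by rw [← Finset.coe_image]; exact hw.2.1 b hb
    have hrev := (isWalk_map_orient_iff hlA fun a ha => Finset.mem_image_of_mem _ (hlA a ha)).1 hw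
    have hpos : ∀ a ∈ l, lab a = true := by
      by_contra! hneg
      exact hval l ⟨x, hrev⟩ (by simpa [Negative] using hneg)
    have hfixed : ∀ a ∈ l, orient lab a ∈ A := fun a ha => by
      rw [orient_of_true (hpos a ha)]; exact hlA a ha
    exact hA _ x ((isWalk_map_orient_iff hlA hfixed).2 hrev)
  · rintro hacyc l ⟨x, hl⟩ -
    exact hacyc _ x
      ((isWalk_map_orient_iff hl.2.1 fun a ha => Finset.mem_image_of_mem _ (hl.2.1 a ha)).2 hl)

end

/-- For the acyclic orientation `G'` of a graph `G` by a linear order, reversing the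
`⊖`-arcs is a bijection between the valid labelings of `G'` and the acyclic orientations
of `G`. -/
theorem statement9 {V : Type*} [LinearOrder V] [DecidableEq V] (A : Finset (V × V))
    (hA : ∀ a ∈ A, a.1 < a.2) :
    Set.BijOn
      (fun lab : V × V → Bool =>
        A.filter (fun a => lab a = true) ∪ (A.filter (fun a => lab a = false)).image Prod.swap)
      {lab | Valid A lab ∧ ∀ a ∉ A, lab a = false}
      {O : Finset (V × V) |
        (∀ a ∈ A, (a ∈ O ∧ a.swap ∉ O) ∨ (a.swap ∈ O ∧ a ∉ O)) ∧
        (∀ b ∈ O, b ∈ A ∨ b.swap ∈ A) ∧ Acyclic O} := by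
  have hasym : ∀ a ∈ A, a.swap ∉ A := fun a ha hs => lt_asymm (hA a ha) (hA _ hs)
  have hacyc : Acyclic A := acyclic_of_forall_fst_lt hA
  simp only [filter_union_image_swap_eq_image_orient]
  refine ⟨?_, ?_, ?_⟩
  · rintro lab ⟨hval, -⟩
    obtain ⟨hO₁, hO₂⟩ := image_orient_isOrientationOf hasym (lab := lab)
    exact ⟨hO₁, hO₂, (valid_iff_acyclic_image_orient hacyc).1 hval⟩
  · intro lab₁ h₁ lab₂ h₂ h
    dsimp only at h
    funext a
    by_cases ha : a ∈ A
    · exact Bool.eq_iff_iff.2 <| by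
        rw [← mem_image_orient_iff_of_mem hasym ha, h, mem_image_orient_iff_of_mem hasym ha]
    · rw [h₁.2 a ha, h₂.2 a ha]
  · rintro O ⟨hO₁, hO₂, hOacyc⟩
    have hO : IsOrientationOf A O := ⟨hO₁, hO₂⟩
    refine ⟨labelOf A O, ⟨?_, fun a ha => by simp [labelOf, ha]⟩, image_orient_labelOf hO⟩
    rwa [valid_iff_acyclic_image_orient hacyc, image_orient_labelOf hO]

end UD
end

section
/- If G is a directed cycle on m ≥ 1 arcs, then a labeling lab : A → {⊕,⊖} is valid if and only if it is not the all-⊖ labeling; hence #UD(G) = 2^m − 1. -/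
/-!
On a directed cycle every vertex has exactly one outgoing and one incoming arc, so two
consecutive arcs of a walk in the reversed multidigraph carry the same label. A closed walk
through a `⊖`-arc therefore consists of `⊖`-arcs only, and it can leave such an arc `(i, i + 1)`
only along `(i - 1, i)`; going around, it passes through every arc of the cycle, so all arcs are
`⊖`. Conversely, when every arc is `⊖` the reversed cycle itself is a closed negative walk. Hence
exactly one of the `2 ^ m` labelings is invalid.
-/

namespace UD

variable {V : Type*}

/-- Arc set of the directed cycle on `Fin m`. -/
def cycArcs (m : ℕ) [NeZero m] : Finset (Fin m × Fin m) :=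
  Finset.univ.image (fun i : Fin m => (i, i + 1))

open Fin.NatCast Fin.CommRing

theorem _root_.List.IsChain.exists_rel_of_rel_getLast_head {α : Type*} {R : α → α → Prop}
    {l : List α} (h : l.IsChain R) (hne : l ≠ []) (hcyc : R (l.getLast hne) (l.head hne))
    {a : α} (ha : a ∈ l) : ∃ b ∈ l, R a b := by
  obtain ⟨i, hi, rfl⟩ := List.getElem_of_mem ha
  by_cases hi' : i + 1 < l.length
  · exact ⟨_, List.getElem_mem _, h.getElem i hi'⟩
  · obtain rfl : i = l.length - 1 := by omega
    rw [← List.getLast_eq_getElem hne]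
    exact ⟨_, List.head_mem hne, hcyc⟩

theorem _root_.Fin.forall_of_add_one_imp {m : ℕ} [NeZero m] {P : Fin m → Prop} (a : Fin m)
    (ha : P a) (hstep : ∀ i, P (i + 1) → P i) (i : Fin m) : P i := by
  have hsub : ∀ k : ℕ, P (a - k) := by
    intro k
    induction k with
    | zero => simpa using ha
    | succ k ih => exact hstep _ (by rwa [Nat.cast_succ, sub_add_eq_sub_sub, sub_add_cancel])
  simpa using hsub (a - i).val

theorem IsRevWalk.exists_next {A : Finset (V × V)} {lab : V × V → Bool} {l : List (V × V)}
    {x : V} (hl : IsRevWalk A lab l x x) {a : V × V} (ha : a ∈ l) :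
    ∃ b ∈ l, dst lab a = src lab b := by
  obtain ⟨hne, -, hchain, hhead, hlast⟩ := hl
  rw [List.head?_eq_some_head hne, Option.map_some, Option.some_inj] at hhead
  rw [List.getLast?_eq_some_getLast hne, Option.map_some, Option.some_inj] at hlast
  exact hchain.exists_rel_of_rel_getLast_head hne (hlast.trans hhead.symm) ha

theorem label_eq_of_dst_eq_src {A : Finset (V × V)} (lab : V × V → Bool)
    (hfst : Set.InjOn Prod.fst (A : Set (V × V))) (hsnd : Set.InjOn Prod.snd (A : Set (V × V)))
    {a b : V × V} (ha : a ∈ A) (hb : b ∈ A) (h : dst lab a = src lab b) : lab a = lab b := by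
  unfold dst src at h
  cases hla : lab a <;> cases hlb : lab b <;>
    simp only [hla, hlb, Bool.false_eq_true, ↓reduceIte] at h ⊢
  · rw [hfst ha hb h, hlb] at hla; cases hla
  · rw [hsnd ha hb h, hlb] at hla; cases hla

theorem exists_ext_eq_true_iff [DecidableEq V] {A : Finset (V × V)} {lab : A → Bool} :
    (∃ a ∈ A, ext A lab a = true) ↔ lab ≠ fun _ => false := by
  constructor
  · rintro ⟨a, ha, h⟩ rfl
    simp [ext, ha] at h
  · intro h
    obtain ⟨a, ha⟩ := Function.ne_iff.mp h
    exact ⟨a, a.2, by simpa [ext] using ha⟩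

section Cycle

variable {m : ℕ} [NeZero m]

theorem mem_cycArcs {a : Fin m × Fin m} : a ∈ cycArcs m ↔ a.2 = a.1 + 1 := by
  simp only [cycArcs, Finset.mem_image, Finset.mem_univ, true_and]
  exact ⟨by rintro ⟨i, rfl⟩; rfl, fun h => ⟨a.1, Prod.ext rfl h.symm⟩⟩

theorem injOn_fst_cycArcs : Set.InjOn Prod.fst (cycArcs m : Set (Fin m × Fin m)) :=
  fun a ha b hb h => Prod.ext h (by rw [mem_cycArcs.mp ha, mem_cycArcs.mp hb, h])

theorem injOn_snd_cycArcs : Set.InjOn Prod.snd (cycArcs m : Set (Fin m × Fin m)) :=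
  fun a ha b hb h =>
    injOn_fst_cycArcs ha hb (by rwa [mem_cycArcs.mp ha, mem_cycArcs.mp hb, add_left_inj] at h)

theorem card_cycArcs : (cycArcs m).card = m := by
  rw [cycArcs, Finset.card_image_of_injective _ fun i j h => congrArg Prod.fst h,
    Finset.card_univ, Fintype.card_fin]

theorem valid_cycArcs_of_label_eq_true {lab : Fin m × Fin m → Bool} {a₀ : Fin m × Fin m}
    (ha₀ : a₀ ∈ cycArcs m) (hpos : lab a₀ = true) : Valid (cycArcs m) lab := by
  rintro l ⟨x, hl⟩ ⟨c, hc, hneg⟩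
  have hlA := hl.2.1
  have hstep : ∀ i : Fin m, (i + 1, i + 1 + 1) ∈ l ∧ lab (i + 1, i + 1 + 1) = false →
      (i, i + 1) ∈ l ∧ lab (i, i + 1) = false := by
    rintro i ⟨hil, hilab⟩
    obtain ⟨b, hb, hdst⟩ := hl.exists_next hil
    have hblab : lab b = false := (label_eq_of_dst_eq_src lab injOn_fst_cycArcs
      injOn_snd_cycArcs (hlA _ hil) (hlA b hb) hdst).symm.trans hilab
    simp only [dst, src, hilab, hblab, Bool.false_eq_true, if_false] at hdst
    obtain rfl : b = (i, i + 1) := injOn_snd_cycArcs (hlA b hb) (mem_cycArcs.mpr rfl) hdst.symm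
    exact ⟨hb, hblab⟩
  obtain ⟨i, -, rfl⟩ := Finset.mem_image.mp (hlA c hc)
  obtain ⟨j, -, rfl⟩ := Finset.mem_image.mp ha₀
  have := (Fin.forall_of_add_one_imp (P := fun i => (i, i + 1) ∈ l ∧ lab (i, i + 1) = false)
    i ⟨hc, hneg⟩ hstep j).2
  rw [hpos] at this
  cases this

theorem not_valid_cycArcs_of_forall_label_eq_false {lab : Fin m × Fin m → Bool}
    (hneg : ∀ a ∈ cycArcs m, lab a = false) : ¬ Valid (cycArcs m) lab := by
  let f : ℕ → Fin m × Fin m := fun k => (-((k + 1 : ℕ) : Fin m), -(k : Fin m))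
  have hfA : ∀ k, f k ∈ cycArcs m := fun k => mem_cycArcs.mpr (by simp only [f]; push_cast; ring)
  have hsrc : ∀ k, src lab (f k) = -(k : Fin m) := fun k => by
    simp only [src, hneg _ (hfA k), Bool.false_eq_true, ↓reduceIte]; rfl
  have hdst : ∀ k, dst lab (f k) = -((k + 1 : ℕ) : Fin m) := fun k => by
    simp only [dst, hneg _ (hfA k), Bool.false_eq_true, ↓reduceIte]; rfl
  have hwalk : IsRevWalk (cycArcs m) lab ((List.range m).map f) 0 0 := by
    refine ⟨by simp [NeZero.ne m], by simpa using fun k _ => hfA k, ?_, ?_, ?_⟩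
    · show List.IsChain _ _
      rw [List.isChain_map, List.isChain_range]
      intro k _
      rw [hdst, hsrc]
    · rw [List.head?_map, List.head?_range, if_neg (NeZero.ne m), Option.map_some,
        Option.map_some, hsrc, Nat.cast_zero, neg_zero]
    · rw [List.getLast?_map, List.getLast?_range, if_neg (NeZero.ne m), Option.map_some,
        Option.map_some, hdst, Nat.sub_add_cancel NeZero.one_le, Fin.natCast_self, neg_zero]
  exact fun hv => hv _ ⟨0, hwalk⟩ ⟨f 0, by simpa using ⟨0, NeZero.pos m, rfl⟩, hneg _ (hfA 0)⟩

theorem valid_cycArcs_iff {lab : Fin m × Fin m → Bool} :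
    Valid (cycArcs m) lab ↔ ∃ a ∈ cycArcs m, lab a = true := by
  refine ⟨fun hv => ?_, fun ⟨a, ha, hpos⟩ => valid_cycArcs_of_label_eq_true ha hpos⟩
  by_contra! hneg
  exact not_valid_cycArcs_of_forall_label_eq_false (by simpa using hneg) hv

end Cycle

/-- On a directed cycle, a labeling is valid iff it is not all-`⊖`, so `#UD = 2 ^ m - 1`. -/
theorem statement11 (m : ℕ) [NeZero m] :
    (∀ lab : Fin m × Fin m → Bool,
      Valid (cycArcs m) lab ↔ ∃ a ∈ cycArcs m, lab a = true) ∧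
    numUD (cycArcs m) = 2 ^ m - 1 := by
  refine ⟨fun _ => valid_cycArcs_iff, ?_⟩
  have hUD : ∀ lab : cycArcs m → Bool, ValidOn (cycArcs m) lab ↔ lab ≠ fun _ => false :=
    fun _ => valid_cycArcs_iff.trans exists_ext_eq_true_iff
  rw [numUD, Nat.card_congr (Equiv.subtypeEquivRight hUD), Nat.card_eq_fintype_card,
    Fintype.card_subtype_compl, Fintype.card_subtype_eq, Fintype.card_fun, Fintype.card_bool,
    Fintype.card_coe, card_cycArcs]

end UD
end

section
/- Let G be a digraph whose underlying undirected graph is a cycle with m arcs, but which is not a directed cycle in either direction. Then exactly two labelings of G are invalid, so #UD(G) = 2^m − 2. -/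
namespace UD

variable {V : Type*}

/-- Arc `i` of the oriented cycle joins `i` and `i + 1`; it is directed `i → i + 1` when
`d i = true` and `i + 1 → i` otherwise. `esrc`/`edst` are its endpoints after reversing the
`⊖`-labeled (`false`) arcs. -/
def esrc {m : ℕ} [NeZero m] (d lab : Fin m → Bool) (i : Fin m) : Fin m :=
  if d i = lab i then i else i + 1

def edst {m : ℕ} [NeZero m] (d lab : Fin m → Bool) (i : Fin m) : Fin m :=
  if d i = lab i then i + 1 else i

/-- Validity for the oriented cycle with direction map `d`: no closed walk of the reversed
multidigraph uses a `⊖`-arc. -/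
def CycValid {m : ℕ} [NeZero m] (d lab : Fin m → Bool) : Prop :=
  ∀ l : List (Fin m), l ≠ [] →
    l.Chain' (fun i j => edst d lab i = esrc d lab j) →
    l.getLast?.map (edst d lab) = l.head?.map (esrc d lab) →
    ¬ ∃ i ∈ l, lab i = false

/-!
In the multidigraph obtained by reversing the `⊖`-arcs, an arc pointing from `i` to `i + 1` can
only be followed in a walk by arc `i + 1`, again pointing forward; symmetrically, an arc pointing
from `i + 1` to `i` can only be followed by arc `i - 1`, again pointing backward. So a closed walk
runs around the whole cycle in one direction, which forces the labeling to orient every arc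
consistently. Conversely, for each of these two labelings the whole cycle is a closed walk, and it
contains a `⊖`-arc because the cycle is not directed.
-/

open scoped Fin.NatCast

theorem _root_.Fin.forall_of_imp_add_one {m : ℕ} [NeZero m] {P : Fin m → Prop} (a : Fin m)
    (ha : P a) (h : ∀ i, P i → P (i + 1)) (i : Fin m) : P i := by
  have hk : ∀ k : ℕ, P (a + k) := by
    intro k
    induction k with
    | zero => simpa using ha
    | succ k ih => simpa [add_assoc] using h _ ih
  simpa using hk (i - a).val

theorem _root_.List.IsChain.exists_rel_of_closed {α : Type*} {R : α → α → Prop} {l : List α}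
    (hl : l.IsChain R) (hclose : ∀ x ∈ l.getLast?, ∀ y ∈ l.head?, R x y) {a : α}
    (ha : a ∈ l) :
    ∃ b ∈ l, R a b := by
  obtain ⟨i, hi, rfl⟩ := List.mem_iff_getElem.mp ha
  by_cases hi1 : i + 1 < l.length
  · exact ⟨l[i + 1], List.getElem_mem _, List.isChain_iff_getElem.mp hl i hi1⟩
  · have hne : l ≠ [] := List.ne_nil_of_mem ha
    refine ⟨l.head hne, List.head_mem hne, hclose _ ?_ _ (List.head?_eq_some_head hne)⟩
    rw [List.getLast?_eq_some_getLast hne, List.getLast_eq_getElem]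
    congr; omega

theorem _root_.List.isChain_finRange_add_one (m : ℕ) [NeZero m] :
    (List.finRange m).IsChain (fun i j => j = i + 1) := by
  refine List.isChain_iff_getElem.mpr fun i hi => ?_
  rw [List.length_finRange] at hi
  simp [Fin.ext_iff, Fin.val_add, Nat.mod_eq_of_lt hi]

theorem _root_.List.map_add_one_getLast?_finRange (m : ℕ) [NeZero m] :
    (List.finRange m).getLast?.map (· + 1) = (List.finRange m).head? := by
  have hm := Nat.pos_of_neZero m
  simp [List.getLast?_eq_getElem?, List.head?_eq_getElem?, hm, Fin.ext_iff, Fin.val_add,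
    Nat.sub_add_cancel hm]

def IsClosedWalk {m : ℕ} [NeZero m] (d lab : Fin m → Bool) (l : List (Fin m)) : Prop :=
  l ≠ [] ∧ l.IsChain (fun i j => edst d lab i = esrc d lab j) ∧
    l.getLast?.map (edst d lab) = l.head?.map (esrc d lab)

section OrientedCycle

variable {m : ℕ} [NeZero m] {d lab : Fin m → Bool} {l : List (Fin m)} {a : Fin m}

theorem cycValid_iff :
    CycValid d lab ↔ ∀ l, IsClosedWalk d lab l → ¬ ∃ i ∈ l, lab i = false :=
  ⟨fun h l hl => h l hl.1 hl.2.1 hl.2.2,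
    fun h l hne hchain hclose => h l ⟨hne, hchain, hclose⟩⟩

theorem IsClosedWalk.exists_next (hl : IsClosedWalk d lab l) (ha : a ∈ l) :
    ∃ b ∈ l, edst d lab a = esrc d lab b := by
  refine hl.2.1.exists_rel_of_closed (fun x hx y hy => ?_) ha
  have h := hl.2.2
  rw [Option.mem_def] at hx hy
  rw [hx, hy] at h
  exact Option.some_injective _ h

theorem IsClosedWalk.add_one_mem (hl : IsClosedWalk d lab l) (ha : a ∈ l) (hfwd : d a = lab a) :
    a + 1 ∈ l ∧ d (a + 1) = lab (a + 1) := by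
  obtain ⟨b, hb, hab⟩ := hl.exists_next ha
  by_cases hbfwd : d b = lab b
  · simp only [edst, esrc, if_pos hfwd, if_pos hbfwd] at hab
    exact hab ▸ ⟨hb, hbfwd⟩
  · simp only [edst, esrc, if_pos hfwd, if_neg hbfwd, add_left_inj] at hab
    exact absurd (hab ▸ hfwd) hbfwd

theorem IsClosedWalk.sub_one_mem (hl : IsClosedWalk d lab l) (ha : a ∈ l) (hbwd : d a ≠ lab a) :
    a - 1 ∈ l ∧ d (a - 1) ≠ lab (a - 1) := by
  obtain ⟨b, hb, hab⟩ := hl.exists_next ha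
  by_cases hbfwd : d b = lab b
  · simp only [edst, esrc, if_neg hbwd, if_pos hbfwd] at hab
    exact absurd (hab ▸ hbfwd) hbwd
  · simp only [edst, esrc, if_neg hbwd, if_neg hbfwd] at hab
    rw [hab, add_sub_cancel_right]
    exact ⟨hb, hbfwd⟩

theorem IsClosedWalk.eq_or_eq_not (hl : IsClosedWalk d lab l) :
    lab = d ∨ lab = fun i => !d i := by
  obtain ⟨a, ha⟩ := List.exists_mem_of_ne_nil l hl.1
  by_cases hfwd : d a = lab a
  · left
    funext i
    exact (Fin.forall_of_imp_add_one (P := fun i => i ∈ l ∧ d i = lab i) a ⟨ha, hfwd⟩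
      (fun i hi => hl.add_one_mem hi.1 hi.2) i).2.symm
  · right
    funext i
    have key :=
      Fin.forall_of_imp_add_one (P := fun i => a - i ∈ l ∧ d (a - i) ≠ lab (a - i)) 0
      (by simpa using ⟨ha, hfwd⟩)
      (fun i hi => by simpa [sub_add_eq_sub_sub] using hl.sub_one_mem hi.1 hi.2) (a - i)
    rw [sub_sub_cancel] at key
    exact Bool.eq_not_of_ne (Ne.symm key.2)

theorem isClosedWalk_finRange (h : ∀ i, d i = lab i) : IsClosedWalk d lab (List.finRange m) := by
  have hesrc : esrc d lab = id := funext fun i => if_pos (h i)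
  have hedst : edst d lab = (· + 1) := funext fun i => if_pos (h i)
  refine ⟨?_, ?_, ?_⟩
  · simp [NeZero.ne m]
  · simpa only [hesrc, hedst, id, eq_comm] using List.isChain_finRange_add_one m
  · simpa [hesrc, hedst] using List.map_add_one_getLast?_finRange m

theorem isClosedWalk_finRange_reverse (h : ∀ i, d i ≠ lab i) :
    IsClosedWalk d lab (List.finRange m).reverse := by
  have hesrc : esrc d lab = (· + 1) := funext fun i => if_neg (h i)
  have hedst : edst d lab = id := funext fun i => if_neg (h i)
  refine ⟨?_, ?_, ?_⟩
  · simp [NeZero.ne m]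
  · simpa only [hesrc, hedst, id, List.isChain_reverse] using List.isChain_finRange_add_one m
  · simpa [hesrc, hedst, eq_comm] using List.map_add_one_getLast?_finRange m

theorem not_cycValid_self (hd : ∃ i, d i = false) : ¬ CycValid d d := by
  obtain ⟨i, hi⟩ := hd
  exact fun hv => cycValid_iff.mp hv _ (isClosedWalk_finRange fun _ => rfl)
    ⟨i, List.mem_finRange i, hi⟩

theorem not_cycValid_not (hd : ∃ i, d i = true) : ¬ CycValid d (fun i => !d i) := by
  obtain ⟨i, hi⟩ := hd
  exact fun hv => cycValid_iff.mp hv _ (isClosedWalk_finRange_reverse fun _ => by simp)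
    ⟨i, by simp, by simp [hi]⟩

theorem cycValid_iff_ne (hd1 : ∃ i, d i = true) (hd2 : ∃ i, d i = false) :
    CycValid d lab ↔ lab ≠ d ∧ lab ≠ fun i => !d i := by
  refine ⟨fun hv => ⟨?_, ?_⟩, fun ⟨hne, hne'⟩ => cycValid_iff.mpr fun l hl => ?_⟩
  · rintro rfl; exact not_cycValid_self hd2 hv
  · rintro rfl; exact not_cycValid_not hd1 hv
  · exact (hl.eq_or_eq_not.elim hne hne').elim

end OrientedCycle

theorem statement12_general (m : ℕ) [NeZero m] (d : Fin m → Bool)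
    (hd1 : ∃ i, d i = true) (hd2 : ∃ i, d i = false) :
    Nat.card {lab : Fin m → Bool // CycValid d lab} = 2 ^ m - 2 := by
  have hpair : ({d, fun i => !d i} : Finset (Fin m → Bool)).card = 2 :=
    Finset.card_pair fun h => by simpa using congrFun h 0
  rw [Nat.card_congr (Equiv.subtypeEquivRight fun lab => (cycValid_iff_ne hd1 hd2).trans
      (by simp : _ ↔ lab ∉ ({d, fun i => !d i} : Finset (Fin m → Bool)))),
    Nat.card_eq_fintype_card, Fintype.card_subtype_compl, Fintype.card_fun, Fintype.card_coe, hpair]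
  simp

/-- An oriented cycle with `m` arcs which is not a directed cycle in either direction has
exactly `2 ^ m - 2` valid labelings. -/
theorem statement12 (m : ℕ) [NeZero m] (hm : 2 ≤ m) (d : Fin m → Bool)
    (hd1 : ∃ i, d i = true) (hd2 : ∃ i, d i = false) :
    Nat.card {lab : Fin m → Bool // CycValid d lab} = 2 ^ m - 2 :=
  statement12_general m d hd1 hd2

end UD
end

section
/- Let (D,α,β') be the series composition of oss-graphs (G,α,β) and (G',α',β') on disjoint vertex sets, identifying β with α'. If lab ∈ UD_{α,β}^{+,∅}(G) and lab' ∈ UD_{α',β'}^{−,∅}(G'), then the union labeling lab ∪ lab' is a valid labeling of D belonging to UD_{α,β'}^{−,∅}(D). -/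
namespace UD

variable {V : Type*}

/-- Map the vertices of `G'` into the series composition identifying `α' : V'` with `β : V`. -/
def smap {V V' : Type*} [DecidableEq V'] (β : V) (α' : V') : V' → V ⊕ V' :=
  fun w => if w = α' then Sum.inl β else Sum.inr w

/-- Arc set of the series composition of `(G, α, β)` and `(G', α', β')`. -/
def seriesArcs {V V' : Type*} [DecidableEq V] [DecidableEq V'] (A : Finset (V × V))
    (A' : Finset (V' × V')) (β : V) (α' : V') : Finset ((V ⊕ V') × (V ⊕ V')) :=
  A.image (fun a => (Sum.inl a.1, Sum.inl a.2)) ∪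
    A'.image (fun a => (smap β α' a.1, smap β α' a.2))

/-- The union labeling on the series composition. -/
def seriesLab {V V' : Type*} (α' : V') (lab : V × V → Bool) (lab' : V' × V' → Bool) :
    (V ⊕ V') × (V ⊕ V') → Bool := fun b =>
  match b with
  | (Sum.inl x, Sum.inl y) => lab (x, y)
  | (Sum.inl _, Sum.inr w) => lab' (α', w)
  | (Sum.inr w, Sum.inl _) => lab' (w, α')
  | (Sum.inr w, Sum.inr w') => lab' (w, w')

/-!
The glued vertex `β = α'` is a cut vertex of the series composition `D`. Collapsing `G'` onto `β`,
or `G` onto `α'`, turns every walk of the reversed multidigraph of `D` into a walk of the reversed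
multidigraph of `G`, resp. `G'` (arcs of the collapsed side become trivial steps). Hence a closed
walk of `D` through a `⊖`-arc projects to one of `G` or `G'`, and a walk from `β'` to `G` projects
to a walk from `β'` to `α'` in `G'`. Conversely, a walk `α → β` of `G` followed by a negative walk
`α' → β'` of `G'` is a negative walk `α → β'` of `D`. Since validity says that no `⊖`-arc has its
tail reachable from its head, everything reduces to reachability, which collapsing preserves.
-/

open Relation

def RevAdj {W : Type*} (A : Finset (W × W)) (lab : W × W → Bool) (x y : W) : Prop :=
  ∃ a ∈ A, src lab a = x ∧ dst lab a = y

section Walks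

variable {W : Type*} {A : Finset (W × W)} {lab : W × W → Bool}

lemma isRevWalk_singleton_s16 {a : W × W} {x y : W} :
    IsRevWalk A lab [a] x y ↔ a ∈ A ∧ src lab a = x ∧ dst lab a = y := by
  simp [IsRevWalk, List.Chain']

lemma isRevWalk_cons {a : W × W} {l : List (W × W)} {x y : W} (hl : l ≠ []) :
    IsRevWalk A lab (a :: l) x y ↔ a ∈ A ∧ src lab a = x ∧ IsRevWalk A lab l (dst lab a) y := by
  obtain ⟨b, t, rfl⟩ := List.exists_cons_of_ne_nil hl
  simp only [IsRevWalk, List.Chain', List.isChain_cons_cons, List.mem_cons, List.head?_cons,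
    Option.map_some, Option.some_inj, List.getLast?_cons_cons, ne_eq, reduceCtorEq,
    not_false_eq_true, true_and, forall_eq_or_imp]
  tauto

lemma IsRevWalk.append_s16 {l₁ l₂ : List (W × W)} {x y z : W}
    (h₁ : IsRevWalk A lab l₁ x y) (h₂ : IsRevWalk A lab l₂ y z) :
    IsRevWalk A lab (l₁ ++ l₂) x z := by
  induction l₁ generalizing x with
  | nil => exact absurd rfl h₁.1
  | cons a t ih =>
    have hne : t ++ l₂ ≠ [] := by simp [h₂.1]
    rw [List.cons_append, isRevWalk_cons hne]
    by_cases ht : t = []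
    · subst ht
      obtain ⟨ha, hx, rfl⟩ := isRevWalk_singleton_s16.1 h₁
      exact ⟨ha, hx, h₂⟩
    · obtain ⟨ha, hx, ht'⟩ := (isRevWalk_cons ht).1 h₁
      exact ⟨ha, hx, ih ht'⟩

lemma IsRevWalk.transGen_s16 {l : List (W × W)} {x y : W} (h : IsRevWalk A lab l x y) :
    TransGen (RevAdj A lab) x y := by
  induction l generalizing x with
  | nil => exact absurd rfl h.1
  | cons a t ih =>
    by_cases ht : t = []
    · subst ht
      obtain ⟨ha, hx, hy⟩ := isRevWalk_singleton_s16.1 h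
      exact .single ⟨a, ha, hx, hy⟩
    · obtain ⟨ha, hx, ht'⟩ := (isRevWalk_cons ht).1 h
      exact .head ⟨a, ha, hx, rfl⟩ (ih ht')

lemma exists_isRevWalk_iff_transGen {x y : W} :
    (∃ l, IsRevWalk A lab l x y) ↔ TransGen (RevAdj A lab) x y := by
  refine ⟨fun ⟨l, hl⟩ => hl.transGen_s16, fun h => ?_⟩
  induction h with
  | single hxy =>
    obtain ⟨a, ha, hx, hy⟩ := hxy
    exact ⟨[a], isRevWalk_singleton_s16.2 ⟨ha, hx, hy⟩⟩
  | tail _ hyz ih =>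
    obtain ⟨l, hl⟩ := ih
    obtain ⟨a, ha, hy, hz⟩ := hyz
    exact ⟨l ++ [a], hl.append_s16 (isRevWalk_singleton_s16.2 ⟨ha, hy, hz⟩)⟩

lemma IsRevWalk.reflTransGen_of_mem {l : List (W × W)} {x y : W} {a : W × W}
    (h : IsRevWalk A lab l x y) (ha : a ∈ l) :
    ReflTransGen (RevAdj A lab) x (src lab a) ∧
      ReflTransGen (RevAdj A lab) (dst lab a) y := by
  induction l generalizing x with
  | nil => simp at ha
  | cons b t ih =>
    by_cases ht : t = []
    · subst ht
      obtain ⟨-, rfl, rfl⟩ := isRevWalk_singleton_s16.1 h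
      obtain rfl := List.mem_singleton.1 ha
      exact ⟨.refl, .refl⟩
    · obtain ⟨hb, rfl, ht'⟩ := (isRevWalk_cons ht).1 h
      rcases List.mem_cons.1 ha with rfl | ha
      · exact ⟨.refl, ht'.transGen_s16.to_reflTransGen⟩
      · obtain ⟨hsrc, hdst⟩ := ih ht' ha
        exact ⟨.head ⟨b, hb, rfl, rfl⟩ hsrc, hdst⟩

lemma IsRevWalk.exists_prepend {l : List (W × W)} {x u y : W}
    (hxu : ReflTransGen (RevAdj A lab) x u) (h : IsRevWalk A lab l u y) :
    ∃ l₀, IsRevWalk A lab (l₀ ++ l) x y := by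
  rcases reflTransGen_iff_eq_or_transGen.1 hxu with rfl | hxu
  · exact ⟨[], h⟩
  · obtain ⟨l₀, hl₀⟩ := exists_isRevWalk_iff_transGen.2 hxu
    exact ⟨l₀, hl₀.append_s16 h⟩

lemma IsRevWalk.exists_append {l : List (W × W)} {x v y : W}
    (h : IsRevWalk A lab l x v) (hvy : ReflTransGen (RevAdj A lab) v y) :
    ∃ l₀, IsRevWalk A lab (l ++ l₀) x y := by
  rcases reflTransGen_iff_eq_or_transGen.1 hvy with rfl | hvy
  · exact ⟨[], by simpa using h⟩
  · obtain ⟨l₀, hl₀⟩ := exists_isRevWalk_iff_transGen.2 hvy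
    exact ⟨l₀, h.append_s16 hl₀⟩

lemma exists_negative_isRevWalk_iff {x y : W} :
    (∃ l, IsRevWalk A lab l x y ∧ Negative lab l) ↔
      ∃ a ∈ A, lab a = false ∧ ReflTransGen (RevAdj A lab) x (src lab a) ∧
        ReflTransGen (RevAdj A lab) (dst lab a) y := by
  constructor
  · rintro ⟨l, hl, a, ha, hneg⟩
    exact ⟨a, hl.2.1 a ha, hneg, hl.reflTransGen_of_mem ha⟩
  · rintro ⟨a, ha, hneg, hx, hy⟩
    obtain ⟨l₁, hl₁⟩ := (isRevWalk_singleton_s16.2 ⟨ha, rfl, rfl⟩).exists_append hy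
    obtain ⟨l₀, hl₀⟩ := hl₁.exists_prepend hx
    exact ⟨_, hl₀, a, by simp, hneg⟩

theorem valid_iff_forall_not_reflTransGen :
    Valid A lab ↔ ∀ a ∈ A, lab a = false →
      ¬ ReflTransGen (RevAdj A lab) (dst lab a) (src lab a) := by
  have key : Valid A lab ↔ ¬ ∃ x, ∃ l, IsRevWalk A lab l x x ∧ Negative lab l := by
    simp only [Valid, not_exists, not_and]
    exact ⟨fun h x l hl => h l ⟨x, hl⟩, fun h l ⟨x, hl⟩ => h x l hl⟩
  simp only [key, exists_negative_isRevWalk_iff, not_exists, not_and]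
  refine ⟨fun h a ha hneg hcyc => h (src lab a) a ha hneg .refl hcyc,
    fun h x a ha hneg hx hy => h a ha hneg (hy.trans hx)⟩

end Walks

section Series

variable {V V' : Type*} {β : V} {α' : V'} {lab : V × V → Bool} {lab' : V' × V' → Bool}

def inlArc (a : V × V) : (V ⊕ V') × (V ⊕ V') := (Sum.inl a.1, Sum.inl a.2)

lemma seriesLab_inlArc (a : V × V) : seriesLab α' lab lab' (inlArc (V' := V') a) = lab a := rfl

lemma src_inlArc (a : V × V) :
    src (seriesLab α' lab lab') (inlArc (V' := V') a) = Sum.inl (src lab a) := by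
  unfold src; rw [seriesLab_inlArc]; split_ifs <;> rfl

lemma dst_inlArc (a : V × V) :
    dst (seriesLab α' lab lab') (inlArc (V' := V') a) = Sum.inl (dst lab a) := by
  unfold dst; rw [seriesLab_inlArc]; split_ifs <;> rfl

variable [DecidableEq V']

lemma smap_self : smap β α' α' = Sum.inl β := if_pos rfl

lemma smap_of_ne {w : V'} (hw : w ≠ α') : smap β α' w = Sum.inr w := if_neg hw

def smapArc (β : V) (α' : V') (a : V' × V') : (V ⊕ V') × (V ⊕ V') :=
  (smap β α' a.1, smap β α' a.2)

lemma mem_seriesArcs [DecidableEq V] {A : Finset (V × V)} {A' : Finset (V' × V')}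
    {b : (V ⊕ V') × (V ⊕ V')} :
    b ∈ seriesArcs A A' β α' ↔ (∃ a ∈ A, inlArc a = b) ∨ ∃ a ∈ A', smapArc β α' a = b := by
  simp [seriesArcs, inlArc, smapArc]

lemma seriesLab_smapArc {a : V' × V'} (ha : a.1 ≠ a.2) :
    seriesLab α' lab lab' (smapArc β α' a) = lab' a := by
  obtain ⟨x, y⟩ := a
  simp only [smapArc, smap]
  split_ifs with hx hy hy
  · exact absurd (hx.trans hy.symm) ha
  all_goals simp_all [seriesLab]

lemma src_smapArc (a : V' × V') :
    src (seriesLab α' lab lab') (smapArc β α' a) = smap β α' (src lab' a) := by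
  by_cases ha : a.1 = a.2
  · simp [src, smapArc, ha]
  · unfold src; rw [seriesLab_smapArc ha]; split_ifs <;> rfl

lemma dst_smapArc (a : V' × V') :
    dst (seriesLab α' lab lab') (smapArc β α' a) = smap β α' (dst lab' a) := by
  by_cases ha : a.1 = a.2
  · simp [dst, smapArc, ha]
  · unfold dst; rw [seriesLab_smapArc ha]; split_ifs <;> rfl

def projL (β : V) : V ⊕ V' → V := Sum.elim id fun _ => β

def projR (α' : V') : V ⊕ V' → V' := Sum.elim (fun _ => α') id

lemma projL_smap (w : V') : projL β (smap β α' w) = β := by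
  unfold smap; split_ifs <;> rfl

lemma projR_smap (w : V') : projR α' (smap β α' w) = w := by
  unfold smap; split_ifs with h
  exacts [h.symm, rfl]

variable [DecidableEq V] {A : Finset (V × V)} {A' : Finset (V' × V')}

lemma RevAdj.series_inl {x y : V} (h : RevAdj A lab x y) :
    RevAdj (seriesArcs A A' β α') (seriesLab α' lab lab') (Sum.inl x) (Sum.inl y) := by
  obtain ⟨a, ha, rfl, rfl⟩ := h
  exact ⟨inlArc a, mem_seriesArcs.2 (Or.inl ⟨a, ha, rfl⟩), src_inlArc a, dst_inlArc a⟩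

lemma RevAdj.series_smap {x y : V'} (h : RevAdj A' lab' x y) :
    RevAdj (seriesArcs A A' β α') (seriesLab α' lab lab') (smap β α' x) (smap β α' y) := by
  obtain ⟨a, ha, rfl, rfl⟩ := h
  exact ⟨smapArc β α' a, mem_seriesArcs.2 (Or.inr ⟨a, ha, rfl⟩), src_smapArc a, dst_smapArc a⟩

lemma reflTransGen_series_inl {x y : V} (h : ReflTransGen (RevAdj A lab) x y) :
    ReflTransGen (RevAdj (seriesArcs A A' β α') (seriesLab α' lab lab'))
      (Sum.inl x) (Sum.inl y) :=
  h.lift _ fun _ _ => RevAdj.series_inl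

lemma reflTransGen_series_smap {x y : V'} (h : ReflTransGen (RevAdj A' lab') x y) :
    ReflTransGen (RevAdj (seriesArcs A A' β α') (seriesLab α' lab lab'))
      (smap β α' x) (smap β α' y) :=
  h.lift _ fun _ _ => RevAdj.series_smap

lemma reflTransGen_projL {u v : V ⊕ V'}
    (h : ReflTransGen (RevAdj (seriesArcs A A' β α') (seriesLab α' lab lab')) u v) :
    ReflTransGen (RevAdj A lab) (projL β u) (projL β v) := by
  refine ReflTransGen.lift' (projL β) ?_ _ _ h
  rintro _ _ ⟨b, hb, rfl, rfl⟩
  rcases mem_seriesArcs.1 hb with ⟨a, ha, rfl⟩ | ⟨a, -, rfl⟩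
  · rw [Function.onFun, src_inlArc, dst_inlArc]
    exact .single ⟨a, ha, rfl, rfl⟩
  · rw [Function.onFun, src_smapArc, dst_smapArc, projL_smap, projL_smap]

lemma reflTransGen_projR {u v : V ⊕ V'}
    (h : ReflTransGen (RevAdj (seriesArcs A A' β α') (seriesLab α' lab lab')) u v) :
    ReflTransGen (RevAdj A' lab') (projR α' u) (projR α' v) := by
  refine ReflTransGen.lift' (projR α') ?_ _ _ h
  rintro _ _ ⟨b, hb, rfl, rfl⟩
  rcases mem_seriesArcs.1 hb with ⟨a, -, rfl⟩ | ⟨a, ha, rfl⟩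
  · rw [Function.onFun, src_inlArc, dst_inlArc]
    exact .refl
  · rw [Function.onFun, src_smapArc, dst_smapArc, projR_smap, projR_smap]
    exact .single ⟨a, ha, rfl, rfl⟩

theorem valid_series (hloop' : ∀ a ∈ A', a.1 ≠ a.2) (hv : Valid A lab) (hv' : Valid A' lab') :
    Valid (seriesArcs A A' β α') (seriesLab α' lab lab') := by
  rw [valid_iff_forall_not_reflTransGen] at hv hv' ⊢
  intro b hb hneg hcyc
  rcases mem_seriesArcs.1 hb with ⟨a, ha, rfl⟩ | ⟨a, ha, rfl⟩
  · rw [seriesLab_inlArc] at hneg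
    rw [dst_inlArc, src_inlArc] at hcyc
    exact hv a ha hneg (reflTransGen_projL hcyc)
  · rw [seriesLab_smapArc (hloop' a ha)] at hneg
    rw [dst_smapArc, src_smapArc] at hcyc
    have hcyc' := reflTransGen_projR hcyc
    rw [projR_smap, projR_smap] at hcyc'
    exact hv' a ha hneg hcyc'

theorem hasClass_neg_series (hloop' : ∀ a ∈ A', a.1 ≠ a.2) {α : V} {β' : V'} (hαβ' : α' ≠ β')
    (h : ∃ l, IsRevWalk A lab l α β) (h' : HasClass A' lab' α' β' PClass.neg) :
    HasClass (seriesArcs A A' β α') (seriesLab α' lab lab') (Sum.inl α) (Sum.inr β')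
      PClass.neg := by
  obtain ⟨a, ha, hneg, hsrc, hdst⟩ := exists_negative_isRevWalk_iff.1 h'
  have hαβ : ReflTransGen (RevAdj (seriesArcs A A' β α') (seriesLab α' lab lab'))
      (Sum.inl α) (Sum.inl β) :=
    reflTransGen_series_inl (exists_isRevWalk_iff_transGen.1 h).to_reflTransGen
  refine exists_negative_isRevWalk_iff.2 ⟨smapArc β α' a, mem_seriesArcs.2 (Or.inr ⟨a, ha, rfl⟩),
    by rwa [seriesLab_smapArc (hloop' a ha)], ?_, ?_⟩
  · rw [src_smapArc]
    refine hαβ.trans ?_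
    rw [← smap_self (β := β) (α' := α')]
    exact reflTransGen_series_smap hsrc
  · rw [dst_smapArc, ← smap_of_ne hαβ'.symm]
    exact reflTransGen_series_smap hdst

theorem hasClass_none_series {β' : V'} (hαβ' : α' ≠ β') (h' : HasClass A' lab' β' α' PClass.none)
    (x : V) :
    HasClass (seriesArcs A A' β α') (seriesLab α' lab lab') (Sum.inr β') (Sum.inl x)
      PClass.none := by
  intro hwalk
  have hproj := reflTransGen_projR (exists_isRevWalk_iff_transGen.1 hwalk).to_reflTransGen
  rcases reflTransGen_iff_eq_or_transGen.1 hproj with heq | htrans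
  · exact hαβ' heq
  · exact h' (exists_isRevWalk_iff_transGen.2 htrans)

end Series

theorem statement16_general {V V' : Type*} [DecidableEq V] [DecidableEq V']
    (A : Finset (V × V)) (A' : Finset (V' × V')) (α β : V) (α' β' : V')
    (hαβ' : α' ≠ β')
    (hloop' : ∀ a ∈ A', a.1 ≠ a.2)
    (lab : V × V → Bool) (lab' : V' × V' → Bool)
    (hv : Valid A lab) (hv' : Valid A' lab')
    (h1 : HasClass A lab α β PClass.pos)
    (h1' : HasClass A' lab' α' β' PClass.neg) (h2' : HasClass A' lab' β' α' PClass.none) :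
    Valid (seriesArcs A A' β α') (seriesLab α' lab lab') ∧
    HasClass (seriesArcs A A' β α') (seriesLab α' lab lab')
      (Sum.inl α) (Sum.inr β') PClass.neg ∧
    HasClass (seriesArcs A A' β α') (seriesLab α' lab lab')
      (Sum.inr β') (Sum.inl α) PClass.none :=
  ⟨valid_series hloop' hv hv', hasClass_neg_series hloop' hαβ' h1.1 h1',
    hasClass_none_series hαβ' h2' α⟩

/-- For the series composition `D` of `(G, α, β)` and `(G', α', β')`, the union of a
labeling in `UD_{α,β}^{+,∅}(G)` and a labeling in `UD_{α',β'}^{-,∅}(G')` is a valid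
labeling of `D` lying in `UD_{α,β'}^{-,∅}(D)`. -/
theorem statement16 {V V' : Type*} [DecidableEq V] [DecidableEq V']
    (A : Finset (V × V)) (A' : Finset (V' × V')) (α β : V) (α' β' : V')
    (hαβ : α ≠ β) (hαβ' : α' ≠ β')
    (hloop : ∀ a ∈ A, a.1 ≠ a.2) (hloop' : ∀ a ∈ A', a.1 ≠ a.2)
    (lab : V × V → Bool) (lab' : V' × V' → Bool)
    (hv : Valid A lab) (hv' : Valid A' lab')
    (h1 : HasClass A lab α β PClass.pos) (h2 : HasClass A lab β α PClass.none)
    (h1' : HasClass A' lab' α' β' PClass.neg) (h2' : HasClass A' lab' β' α' PClass.none) :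
    Valid (seriesArcs A A' β α') (seriesLab α' lab lab') ∧
    HasClass (seriesArcs A A' β α') (seriesLab α' lab lab')
      (Sum.inl α) (Sum.inr β') PClass.neg ∧
    HasClass (seriesArcs A A' β α') (seriesLab α' lab lab')
      (Sum.inr β') (Sum.inl α) PClass.none :=
  statement16_general A A' α β α' β' hαβ' hloop' lab lab' hv hv' h1 h1' h2'

end UD
end
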